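/- Fix b > 0 with r := 1/(2b) ∉ ℕ, set n := ⌊r⌋ + 1 and ρ := r − ⌊r⌋ ∈ (0,1), and define positions x_j for j = 1,…,2n by x_j := (j−1)/(2r) if j is odd and x_j := 1 − (2n−j)/(2r) if j is even. Define masses m_j := (2n−(j−1))/(2n(n+1)) if j is odd and m_j := j/(2n(n+1)) if j is even, and let μ := Σ_{j=1}^{2n} m_j·δ_{x_j}. Then μ is a probability measure, and the output density p_Y(y; μ) := r·μ([y−b, y+b] ∩ [0,1]) satisfies, for all but finitely many y ∈ (−b, 1+b): p_Y(y; μ) = r/(n+1) if y ∈ [(2j−3)/(2r), (2j−3+2ρ)/(2r)) for some j ∈ {1,…,n+1}, and p_Y(y; μ) = r/n if y ∈ [(2j−3+2ρ)/(2r), (2j−1)/(2r)) for some j ∈ {1,…,n}. -/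

import Mathlib

open MeasureTheory Set

/-- Output density of the additive uniform noise channel:
`p_Y(y; μ) = r · μ([y−b, y+b] ∩ [0,1])`. -/
noncomputable def outDen (r b : ℝ) (μ : Measure ℝ) (y : ℝ) : ℝ :=
  r * (μ (Icc (y - b) (y + b) ∩ Icc 0 1)).toReal

lemma sum_range_two_mul' (g : ℕ → ℝ) (k : ℕ) :
    ∑ j ∈ Finset.range (2*k), g j = ∑ i ∈ Finset.range k, (g (2*i) + g (2*i+1)) := by
  induction k with
  | zero => simp
  | succ k ih =>
    have h : 2 * (k+1) = (2*k) + 1 + 1 := by ring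
    rw [h, Finset.sum_range_succ, Finset.sum_range_succ, ih, Finset.sum_range_succ]
    ring

set_option maxHeartbeats 2000000 in
/-- Non-integer case `r = 1/(2b) ∉ ℕ`, `n = ⌊r⌋+1`, `ρ = r−⌊r⌋`:
the 2n mass points of the unconstrained (Oettli) configuration form a probability
measure whose output density is piecewise constant taking the value `r/(n+1)` on the
odd segments and `r/n` on the even segments, for all but finitely many `y ∈ (−b,1+b)`. -/
theorem stmt3 (b r : ℝ) (hb : 0 < b) (hr : r = 1 / (2 * b))
    (hrnat : ¬ ∃ k : ℕ, r = (k : ℝ))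
    (n : ℕ) (hn : n = ⌊r⌋₊ + 1) (ρ : ℝ) (hρ : ρ = r - (⌊r⌋₊ : ℝ))
    (x : ℕ → ℝ)
    (hxo : ∀ j, j % 2 = 1 → x j = ((j : ℝ) - 1) / (2 * r))
    (hxe : ∀ j, j % 2 = 0 → x j = 1 - ((2 * (n : ℝ)) - (j : ℝ)) / (2 * r))
    (m : ℕ → ℝ)
    (hmo : ∀ j, j % 2 = 1 → m j = (2 * (n : ℝ) - ((j : ℝ) - 1)) / (2 * (n : ℝ) * ((n : ℝ) + 1)))
    (hme : ∀ j, j % 2 = 0 → m j = (j : ℝ) / (2 * (n : ℝ) * ((n : ℝ) + 1)))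
    (μ : Measure ℝ)
    (hμ : μ = ∑ j ∈ Finset.Icc 1 (2 * n), ENNReal.ofReal (m j) • Measure.dirac (x j)) :
    IsProbabilityMeasure μ ∧
    ∃ F : Set ℝ, F.Finite ∧ ∀ y ∈ Ioo (-b) (1 + b) \ F,
      ((∃ j ∈ Finset.Icc 1 (n + 1),
          y ∈ Ico ((2 * (j : ℝ) - 3) / (2 * r)) ((2 * (j : ℝ) - 3 + 2 * ρ) / (2 * r))) →
        outDen r b μ y = r / ((n : ℝ) + 1)) ∧
      ((∃ j ∈ Finset.Icc 1 n,
          y ∈ Ico ((2 * (j : ℝ) - 3 + 2 * ρ) / (2 * r)) ((2 * (j : ℝ) - 1) / (2 * r))) →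
        outDen r b μ y = r / (n : ℝ)) := by
  -- basic facts
  have hb0 : b ≠ 0 := ne_of_gt hb
  have hr0 : 0 < r := by rw [hr]; positivity
  have h2r : (0:ℝ) < 2 * r := by linarith
  have hrb : 2 * r * b = 1 := by rw [hr]; field_simp
  have hfl : (⌊r⌋₊ : ℝ) ≤ r := Nat.floor_le hr0.le
  have hρ0 : 0 < ρ := by
    rcases lt_or_eq_of_le hfl with h | h
    · rw [hρ]; linarith
    · exact absurd ⟨⌊r⌋₊, h.symm⟩ hrnat
  have hρ1 : ρ < 1 := by
    have h := Nat.lt_floor_add_one r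
    rw [hρ]; linarith
  have hnn : 1 ≤ n := by omega
  have hnR1 : (1:ℝ) ≤ (n:ℝ) := by exact_mod_cast hnn
  have hnR0 : (0:ℝ) < (n:ℝ) := by linarith
  have hnne : (n:ℝ) ≠ 0 := ne_of_gt hnR0
  have hn1ne : (n:ℝ) + 1 ≠ 0 := by positivity
  have hrval : r = (n:ℝ) - 1 + ρ := by
    rw [hρ, hn]; push_cast; ring
  -- value of x at even points
  have hxeval : ∀ k, k % 2 = 0 → x k = ((k:ℝ) - 2 + 2*ρ) / (2*r) := by
    intro k hk
    rw [hxe k hk]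
    rw [eq_div_iff (ne_of_gt h2r)]
    field_simp
    linarith [hrval]
  -- nonnegativity of masses
  have hm0 : ∀ k ∈ Finset.Icc 1 (2*n), 0 ≤ m k := by
    intro k hk
    simp only [Finset.mem_Icc] at hk
    have hkR : (k:ℝ) ≤ 2*(n:ℝ) := by exact_mod_cast hk.2
    rcases Nat.even_or_odd k with he | ho
    · rw [hme k (Nat.even_iff.mp he)]; positivity
    · rw [hmo k (Nat.odd_iff.mp ho)]
      apply div_nonneg (by linarith) (by positivity)
  -- total mass is 1
  have hsum1 : ∑ k ∈ Finset.Icc 1 (2*n), m k = 1 := by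
    rw [← Finset.Ico_add_one_right_eq_Icc, Finset.sum_Ico_eq_sum_range]
    have h1 : 2*n + 1 - 1 = 2*n := rfl
    rw [h1, sum_range_two_mul' (fun j => m (1+j)) n]
    have hterm : ∀ i ∈ Finset.range n, (fun i => m (1+2*i) + m (1+(2*i+1))) i = 1/(n:ℝ) := by
      intro i _
      simp only
      rw [hmo _ (by omega), hme _ (by omega)]
      push_cast
      field_simp
      ring
    rw [Finset.sum_congr rfl hterm, Finset.sum_const, Finset.card_range, nsmul_eq_mul]
    field_simp
  have hprob : IsProbabilityMeasure μ := by
    constructor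
    rw [hμ, Measure.finset_sum_apply]
    simp only [Measure.smul_apply, smul_eq_mul, measure_univ, mul_one]
    rw [← ENNReal.ofReal_sum_of_nonneg hm0, hsum1, ENNReal.ofReal_one]
  refine ⟨hprob, ?_⟩
  -- the finite exceptional set
  refine ⟨⋃ k ∈ (Finset.Icc 1 (2*n) : Finset ℕ), ({x k - b, x k + b} : Set ℝ), ?_, ?_⟩
  · exact Set.Finite.biUnion (Finset.Icc 1 (2*n)).finite_toSet
      (fun k _ => (Set.finite_singleton _).insert _)
  -- evaluation of the output density
  have hSmeas : ∀ y : ℝ, MeasurableSet (Icc (y-b) (y+b) ∩ Icc (0:ℝ) 1) :=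
    fun y => measurableSet_Icc.inter measurableSet_Icc
  have heval : ∀ y : ℝ,
      outDen r b μ y = r * ∑ k ∈ Finset.Icc 1 (2*n),
        (if x k ∈ Icc (y-b) (y+b) ∩ Icc (0:ℝ) 1 then m k else 0) := by
    intro y
    unfold outDen
    congr 1
    rw [hμ, Measure.finset_sum_apply]
    rw [ENNReal.toReal_sum (fun k _ => by
      simp only [Measure.smul_apply, smul_eq_mul]
      exact ENNReal.mul_ne_top ENNReal.ofReal_ne_top (measure_ne_top _ _))]
    refine Finset.sum_congr rfl fun k hk => ?_
    rw [Measure.smul_apply, smul_eq_mul, Measure.dirac_apply' _ (hSmeas y),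
      Set.indicator_apply]
    split_ifs with h
    · simp [ENNReal.toReal_ofReal (hm0 k hk)]
    · simp
  -- key: if exactly two candidate indices carry the window, the density is their mass sum
  have key : ∀ (y : ℝ) (a a' : ℕ), a ≠ a' →
      (∀ k ∈ Finset.Icc 1 (2*n), (x k ∈ Icc (y-b) (y+b) ∩ Icc (0:ℝ) 1 ↔ k = a ∨ k = a')) →
      outDen r b μ y = r * ((if a ∈ Finset.Icc 1 (2*n) then m a else 0)
        + (if a' ∈ Finset.Icc 1 (2*n) then m a' else 0)) := by
    intro y a a' hne hiff
    rw [heval y]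
    congr 1
    rw [← Finset.sum_ite_eq' (Finset.Icc 1 (2*n)) a (fun k => m k),
      ← Finset.sum_ite_eq' (Finset.Icc 1 (2*n)) a' (fun k => m k),
      ← Finset.sum_add_distrib]
    refine Finset.sum_congr rfl fun k hk => ?_
    rw [if_congr (hiff k hk) rfl rfl]
    by_cases h1 : k = a
    · subst h1
      rw [if_pos (Or.inl rfl), if_pos rfl, if_neg hne, add_zero]
    · by_cases h2 : k = a'
      · subst h2
        rw [if_pos (Or.inr rfl), if_neg h1, if_pos rfl, zero_add]
      · rw [if_neg (by tauto), if_neg h1, if_neg h2, add_zero]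
  intro y hy
  obtain ⟨hyI, hyF⟩ := hy
  have hyF' : ∀ k ∈ Finset.Icc 1 (2*n), y ≠ x k - b ∧ y ≠ x k + b := by
    intro k hk
    constructor <;> intro h <;> exact hyF (Set.mem_biUnion hk (by simp [h]))
  constructor
  · -- odd segments: value r/(n+1)
    rintro ⟨j, hj, hseg⟩
    simp only [Finset.mem_Icc] at hj
    obtain ⟨i, rfl⟩ : ∃ i, j = i + 1 := ⟨j - 1, by omega⟩
    obtain ⟨hseg1, hseg2⟩ := hseg
    push_cast at hseg1 hseg2
    have hY1 : 2*(i:ℝ) - 1 ≤ 2*r*y := by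
      have := (div_le_iff₀ h2r).mp hseg1; linarith
    have hY2 : 2*r*y < 2*(i:ℝ) - 1 + 2*ρ := by
      have := (lt_div_iff₀ h2r).mp hseg2; linarith
    have hiff : ∀ k ∈ Finset.Icc 1 (2*n),
        (x k ∈ Icc (y-b) (y+b) ∩ Icc (0:ℝ) 1 ↔ k = 2*i ∨ k = 2*i+1) := by
      intro k hk
      have hkIcc := hk
      simp only [Finset.mem_Icc] at hk
      simp only [Set.mem_inter_iff, Set.mem_Icc]
      constructor
      · rintro ⟨⟨hxl, hxr⟩, -⟩
        have hne := hyF' k hkIcc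
        have hxl' : y - b < x k := lt_of_le_of_ne hxl (fun h => hne.2 (by linarith))
        have hxr' : x k < y + b := lt_of_le_of_ne hxr (fun h => hne.1 (by linarith))
        rcases Nat.mod_two_eq_zero_or_one k with he | ho
        · obtain ⟨t, rfl⟩ : ∃ t, k = 2*t := ⟨k/2, by omega⟩
          rw [hxeval (2*t) (by omega)] at hxl' hxr'
          have hv1 := (lt_div_iff₀ h2r).mp hxl'
          have hv2 := (div_lt_iff₀ h2r).mp hxr'
          push_cast at hv1 hv2
          have h1 : 2*r*y - 1 < 2*(t:ℝ) - 2 + 2*ρ := by linarith [hrb]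
          have h2 : 2*(t:ℝ) - 2 + 2*ρ < 2*r*y + 1 := by linarith [hrb]
          have e1 : (2*(i:ℝ)) < 2*(t:ℝ) + 2 := by linarith
          have e2 : (2*(t:ℝ)) < 2*(i:ℝ) + 2 := by linarith
          have e1' : 2*i < 2*t + 2 := by exact_mod_cast e1
          have e2' : 2*t < 2*i + 2 := by exact_mod_cast e2
          omega
        · obtain ⟨t, rfl⟩ : ∃ t, k = 2*t+1 := ⟨k/2, by omega⟩
          rw [hxo (2*t+1) (by omega)] at hxl' hxr'
          have hv1 := (lt_div_iff₀ h2r).mp hxl'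
          have hv2 := (div_lt_iff₀ h2r).mp hxr'
          push_cast at hv1 hv2
          have h1 : 2*r*y - 1 < 2*(t:ℝ) := by linarith [hrb]
          have h2 : 2*(t:ℝ) < 2*r*y + 1 := by linarith [hrb]
          have e1 : (2*(i:ℝ)) < 2*(t:ℝ) + 2 := by linarith
          have e2 : (2*(t:ℝ)) < 2*(i:ℝ) + 2 := by linarith
          have e1' : 2*i < 2*t + 2 := by exact_mod_cast e1
          have e2' : 2*t < 2*i + 2 := by exact_mod_cast e2
          omega
      · rintro (rfl | rfl)
        · -- k = 2i, even point, i ≥ 1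
          have hi1R : (1:ℝ) ≤ (i:ℝ) := by exact_mod_cast (show 1 ≤ i by omega)
          have hinR : (i:ℝ) ≤ (n:ℝ) := by exact_mod_cast (show i ≤ n by omega)
          rw [hxeval (2*i) (by omega)]
          push_cast
          refine ⟨⟨?_, ?_⟩, ?_, ?_⟩
          · rw [le_div_iff₀ h2r]; nlinarith [hrb]
          · rw [div_le_iff₀ h2r]; nlinarith [hrb]
          · apply div_nonneg (by linarith) (le_of_lt h2r)
          · rw [div_le_one h2r]; linarith [hrval]
        · -- k = 2i+1, odd point
          have hinR : (i:ℝ) ≤ (n:ℝ) - 1 := by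
            have h' : i + 1 ≤ n := by omega
            have := (Nat.cast_le (α := ℝ)).mpr h'
            push_cast at this; linarith
          rw [hxo (2*i+1) (by omega)]
          push_cast
          refine ⟨⟨?_, ?_⟩, ?_, ?_⟩
          · rw [le_div_iff₀ h2r]; nlinarith [hrb]
          · rw [div_le_iff₀ h2r]; nlinarith [hrb]
          · apply div_nonneg (by linarith [hρ0]) (le_of_lt h2r)
          · rw [div_le_one h2r]; linarith [hrval]
    rw [key y (2*i) (2*i+1) (by omega) hiff]
    have hmA : m (2*i) = (2*(i:ℝ)) / (2*(n:ℝ)*((n:ℝ)+1)) := by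
      rw [hme _ (by omega)]; push_cast; ring_nf
    have hmB : m (2*i+1) = (2*(n:ℝ) - 2*(i:ℝ)) / (2*(n:ℝ)*((n:ℝ)+1)) := by
      rw [hmo _ (by omega)]; push_cast; ring_nf
    by_cases hi0 : i = 0
    · subst hi0
      rw [if_neg (by simp), if_pos (by simp only [Finset.mem_Icc]; omega)]
      rw [hmB]
      push_cast
      field_simp
      ring
    · by_cases hin : i = n
      · subst hin
        rw [if_pos (by simp only [Finset.mem_Icc]; omega),
          if_neg (by simp only [Finset.mem_Icc]; omega)]
        rw [hmA]
        field_simp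
        ring
      · rw [if_pos (by simp only [Finset.mem_Icc]; omega),
          if_pos (by simp only [Finset.mem_Icc]; omega)]
        rw [hmA, hmB]
        field_simp
        ring
  · -- even segments: value r/n
    rintro ⟨j, hj, hseg⟩
    simp only [Finset.mem_Icc] at hj
    obtain ⟨i, rfl⟩ : ∃ i, j = i + 1 := ⟨j - 1, by omega⟩
    obtain ⟨hseg1, hseg2⟩ := hseg
    push_cast at hseg1 hseg2
    have hY1 : 2*(i:ℝ) - 1 + 2*ρ ≤ 2*r*y := by
      have := (div_le_iff₀ h2r).mp hseg1; linarith
    have hY2 : 2*r*y < 2*(i:ℝ) + 1 := by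
      have := (lt_div_iff₀ h2r).mp hseg2; linarith
    have hiff : ∀ k ∈ Finset.Icc 1 (2*n),
        (x k ∈ Icc (y-b) (y+b) ∩ Icc (0:ℝ) 1 ↔ k = 2*i+1 ∨ k = 2*i+2) := by
      intro k hk
      have hkIcc := hk
      simp only [Finset.mem_Icc] at hk
      simp only [Set.mem_inter_iff, Set.mem_Icc]
      constructor
      · rintro ⟨⟨hxl, hxr⟩, -⟩
        have hne := hyF' k hkIcc
        have hxl' : y - b < x k := lt_of_le_of_ne hxl (fun h => hne.2 (by linarith))
        have hxr' : x k < y + b := lt_of_le_of_ne hxr (fun h => hne.1 (by linarith))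
        rcases Nat.mod_two_eq_zero_or_one k with he | ho
        · obtain ⟨t, rfl⟩ : ∃ t, k = 2*t := ⟨k/2, by omega⟩
          rw [hxeval (2*t) (by omega)] at hxl' hxr'
          have hv1 := (lt_div_iff₀ h2r).mp hxl'
          have hv2 := (div_lt_iff₀ h2r).mp hxr'
          push_cast at hv1 hv2
          have h1 : 2*r*y - 1 < 2*(t:ℝ) - 2 + 2*ρ := by linarith [hrb]
          have h2 : 2*(t:ℝ) - 2 + 2*ρ < 2*r*y + 1 := by linarith [hrb]
          have e1 : (2*(i:ℝ)) + 2 < 2*(t:ℝ) + 2 := by linarith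
          have e2 : (2*(t:ℝ)) < 2*(i:ℝ) + 4 := by linarith
          have e1' : 2*i + 2 < 2*t + 2 := by exact_mod_cast e1
          have e2' : 2*t < 2*i + 4 := by exact_mod_cast e2
          omega
        · obtain ⟨t, rfl⟩ : ∃ t, k = 2*t+1 := ⟨k/2, by omega⟩
          rw [hxo (2*t+1) (by omega)] at hxl' hxr'
          have hv1 := (lt_div_iff₀ h2r).mp hxl'
          have hv2 := (div_lt_iff₀ h2r).mp hxr'
          push_cast at hv1 hv2
          have h1 : 2*r*y - 1 < 2*(t:ℝ) := by linarith [hrb]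
          have h2 : 2*(t:ℝ) < 2*r*y + 1 := by linarith [hrb]
          have e1 : (2*(i:ℝ)) < 2*(t:ℝ) + 2 := by linarith
          have e2 : (2*(t:ℝ)) < 2*(i:ℝ) + 2 := by linarith
          have e1' : 2*i < 2*t + 2 := by exact_mod_cast e1
          have e2' : 2*t < 2*i + 2 := by exact_mod_cast e2
          omega
      · rintro (rfl | rfl)
        · -- k = 2i+1
          have hinR : (i:ℝ) ≤ (n:ℝ) - 1 := by
            have h' : i + 1 ≤ n := by omega
            have := (Nat.cast_le (α := ℝ)).mpr h'
            push_cast at this; linarith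
          rw [hxo (2*i+1) (by omega)]
          push_cast
          refine ⟨⟨?_, ?_⟩, ?_, ?_⟩
          · rw [le_div_iff₀ h2r]; nlinarith [hrb]
          · rw [div_le_iff₀ h2r]; nlinarith [hrb]
          · apply div_nonneg (by linarith [hρ0]) (le_of_lt h2r)
          · rw [div_le_one h2r]; linarith [hrval]
        · -- k = 2i+2
          have hinR : (i:ℝ) ≤ (n:ℝ) - 1 := by
            have h' : i + 1 ≤ n := by omega
            have := (Nat.cast_le (α := ℝ)).mpr h'
            push_cast at this; linarith
          rw [hxeval (2*i+2) (by omega)]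
          push_cast
          refine ⟨⟨?_, ?_⟩, ?_, ?_⟩
          · rw [le_div_iff₀ h2r]; nlinarith [hrb]
          · rw [div_le_iff₀ h2r]; nlinarith [hrb]
          · apply div_nonneg (by linarith [hρ0]) (le_of_lt h2r)
          · rw [div_le_one h2r]; linarith [hrval]
    rw [key y (2*i+1) (2*i+2) (by omega) hiff]
    have hmA : m (2*i+1) = (2*(n:ℝ) - 2*(i:ℝ)) / (2*(n:ℝ)*((n:ℝ)+1)) := by
      rw [hmo _ (by omega)]; push_cast; ring_nf
    have hmB : m (2*i+2) = (2*(i:ℝ)+2) / (2*(n:ℝ)*((n:ℝ)+1)) := by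
      rw [hme _ (by omega)]; push_cast; ring_nf
    rw [if_pos (by simp only [Finset.mem_Icc]; omega),
      if_pos (by simp only [Finset.mem_Icc]; omega)]
    rw [hmA, hmB]
    field_simp
    ring
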